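/- Let ρ be a d×d complex positive semidefinite matrix with trace 1, let 0 < α < 1, and let Φ_1, …, Φ_N (N ≥ 2) be quantum channels, where Φ_s has Kraus operators K^s_1, …, K^s_n (d×d complex matrices with ∑_{i=1}^n (K^s_i)† K^s_i = I). Then for all permutations π_1, …, π_N of {1, …, n}: ∑_{s=1}^N I^α_ρ(Φ_s) ≥ (1/N) · [ ∑_{i=1}^n I^α_ρ(∑_{s=1}^N K^s_{π_s(i)}) + (2/(N(N − 1))) · (∑_{1 ≤ s < t ≤ N} √(∑_{i=1}^n I^α_ρ(K^s_{π_s(i)} − K^t_{π_t(i)})))² ], where √ denotes the real square root. -/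

import Mathlib

open Matrix Finset
open scoped ComplexOrder

/-- `ρ^α` via the continuous functional calculus applied to `t ↦ t ^ α`. -/
noncomputable def mpow {d : ℕ} (ρ : Matrix (Fin d) (Fin d) ℂ) (α : ℝ) :
    Matrix (Fin d) (Fin d) ℂ :=
  cfc (fun t : ℝ => t ^ α) ρ

/-- The Wigner–Yanase–Dyson skew information
`I^α_ρ(K) = −(1/2) Tr([ρ^α, K†] [ρ^{1−α}, K])` of an arbitrary matrix `K`. -/
noncomputable def wyd {d : ℕ} (ρ : Matrix (Fin d) (Fin d) ℂ) (α : ℝ)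
    (K : Matrix (Fin d) (Fin d) ℂ) : ℝ :=
  (-(1 / 2 : ℂ) *
    ((mpow ρ α * Kᴴ - Kᴴ * mpow ρ α) * (mpow ρ (1 - α) * K - K * mpow ρ (1 - α))).trace).re

/-! In an eigenbasis of `ρ` the skew information is a nonnegatively weighted sum of squared
moduli of matrix entries: `I^α_ρ(K) = ∑_{j,k} ½ (λ_j^α - λ_k^α)(λ_j^{1-α} - λ_k^{1-α}) |K_{jk}|²`.
Applying the identity `N ∑_s |z_s|² = |∑_s z_s|² + ∑_{s<t} |z_s - z_t|²` entrywise to the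
matrices `K^s_{π_s(i)}` (the permutations only reindex each channel's sum) gives
`N ∑_s I(Φ_s) = ∑_i I(∑_s K^s_{π_s(i)}) + ∑_{s<t} D_{st}` with `D_{st} ≥ 0`, and Cauchy–Schwarz
over the `N(N-1)/2` pairs gives `(∑_{s<t} √D_{st})² ≤ N(N-1)/2 · ∑_{s<t} D_{st}`. -/

section pairs
variable {ι : Type*} [Fintype ι] [LinearOrder ι]

theorem sum_sum_eq_two_nsmul_sum_lt {M : Type*} [AddCommMonoid M] (F : ι → ι → M)
    (hsymm : ∀ i j, F i j = F j i) (hdiag : ∀ i, F i i = 0) :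
    ∑ i, ∑ j, F i j = 2 • ∑ p ∈ univ.filter (fun p : ι × ι => p.1 < p.2), F p.1 p.2 := by
  have hsplit : ∀ p : ι × ι,
      F p.1 p.2 = (if p.1 < p.2 then F p.1 p.2 else 0) + (if p.2 < p.1 then F p.1 p.2 else 0) := by
    rintro ⟨i, j⟩
    rcases lt_trichotomy i j with h | rfl | h
    · simp [h, h.not_gt]
    · simp [hdiag]
    · simp [h, h.not_gt]
  have hswap : ∑ p ∈ univ.filter (fun p : ι × ι => p.2 < p.1), F p.1 p.2
      = ∑ p ∈ univ.filter (fun p : ι × ι => p.1 < p.2), F p.1 p.2 :=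
    Finset.sum_equiv (Equiv.prodComm ι ι) (by simp) (fun p _ => by simp [hsymm])
  rw [← Fintype.sum_prod_type', Finset.sum_congr rfl fun p _ => hsplit p, sum_add_distrib,
    ← sum_filter, ← sum_filter, hswap, two_nsmul]

theorem card_mul_sum_norm_sq_eq {E : Type*} [NormedAddCommGroup E] [InnerProductSpace ℝ E]
    (v : ι → E) :
    (Fintype.card ι : ℝ) * ∑ i, ‖v i‖ ^ 2 =
      ‖∑ i, v i‖ ^ 2 + ∑ p ∈ univ.filter (fun p : ι × ι => p.1 < p.2), ‖v p.1 - v p.2‖ ^ 2 := by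
  have hpairs := sum_sum_eq_two_nsmul_sum_lt (fun i j => ‖v i - v j‖ ^ 2)
    (fun i j => by rw [norm_sub_rev]) (fun i => by simp)
  have hdouble : ∑ i, ∑ j, ‖v i - v j‖ ^ 2 =
      2 * (Fintype.card ι : ℝ) * ∑ i, ‖v i‖ ^ 2 - 2 * ‖∑ i, v i‖ ^ 2 := by
    rw [← real_inner_self_eq_norm_sq (∑ i, v i), sum_inner]
    simp only [norm_sub_sq_real, inner_sum, sum_add_distrib, sum_sub_distrib, sum_const,
      card_univ, nsmul_eq_mul, ← mul_sum]
    ring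
  rw [two_nsmul] at hpairs
  linarith

end pairs

theorem inv_card_mul_sq_sum_sqrt_le_sum {ι : Type*} (s : Finset ι) (f : ι → ℝ)
    (hf : ∀ i ∈ s, 0 ≤ f i) :
    (#s : ℝ)⁻¹ * (∑ i ∈ s, √(f i)) ^ 2 ≤ ∑ i ∈ s, f i := by
  rcases s.eq_empty_or_nonempty with rfl | hs
  · simp
  rw [inv_mul_le_iff₀ (by exact_mod_cast hs.card_pos)]
  calc (∑ i ∈ s, √(f i)) ^ 2 ≤ #s * ∑ i ∈ s, √(f i) ^ 2 := sq_sum_le_card_mul_sum_sq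
    _ = #s * ∑ i ∈ s, f i := by
      rw [sum_congr rfl fun i hi => Real.sq_sqrt (hf i hi)]

theorem trace_commutator_diagonal_mul_commutator_diagonal {m : Type*} [Fintype m]
    [DecidableEq m] (a b : m → ℝ) (M : Matrix m m ℂ) :
    ((diagonal (fun i => (a i : ℂ)) * Mᴴ - Mᴴ * diagonal (fun i => (a i : ℂ))) *
        (diagonal (fun i => (b i : ℂ)) * M - M * diagonal (fun i => (b i : ℂ)))).trace =
      -((∑ j, ∑ k, (a j - a k) * (b j - b k) * ‖M j k‖ ^ 2 : ℝ) : ℂ) := by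
  simp only [Matrix.trace, Matrix.diag, Matrix.mul_apply, Matrix.sub_apply,
    Matrix.diagonal_apply, ite_mul, mul_ite, zero_mul, mul_zero,
    Finset.sum_ite_eq, Finset.sum_ite_eq', Finset.mem_univ, if_true]
  rw [sum_comm]
  push_cast
  rw [← sum_neg_distrib]
  refine sum_congr rfl fun j _ => ?_
  rw [← sum_neg_distrib]
  refine sum_congr rfl fun k _ => ?_
  rw [conjTranspose_apply, RCLike.star_def, ← Complex.conj_mul']
  ring

section skewInformation
variable {d : ℕ} {ρ : Matrix (Fin d) (Fin d) ℂ}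

noncomputable def skewWeight (hρ : ρ.IsHermitian) (α : ℝ) (j k : Fin d) : ℝ :=
  (hρ.eigenvalues j ^ α - hρ.eigenvalues k ^ α) *
    (hρ.eigenvalues j ^ (1 - α) - hρ.eigenvalues k ^ (1 - α)) / 2

theorem skewWeight_nonneg (hρ : ρ.PosSemidef) {α : ℝ} (hα0 : 0 ≤ α) (hα1 : α ≤ 1)
    (j k : Fin d) :
    0 ≤ skewWeight hρ.1 α j k := by
  have hmono : ∀ {β : ℝ}, 0 ≤ β → MonotoneOn (fun x : ℝ => x ^ β) (Set.Ici 0) :=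
    fun hβ => Real.monotoneOn_rpow_Ici_of_exponent_nonneg hβ
  have := ((hmono hα0).monovaryOn (hmono (sub_nonneg.2 hα1))).sub_mul_sub_nonneg
    (hρ.eigenvalues_nonneg k) (hρ.eigenvalues_nonneg j)
  exact div_nonneg this zero_le_two

theorem wyd_eq_sum_skewWeight (hρ : ρ.IsHermitian) (α : ℝ) (K : Matrix (Fin d) (Fin d) ℂ) :
    wyd ρ α K = ∑ j, ∑ k, skewWeight hρ α j k *
      ‖(star (hρ.eigenvectorUnitary : Matrix (Fin d) (Fin d) ℂ) * K *
        hρ.eigenvectorUnitary) j k‖ ^ 2 := by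
  set U := hρ.eigenvectorUnitary
  set φ := (Unitary.conjStarAlgAut ℂ (Matrix (Fin d) (Fin d) ℂ) U).symm
  have hpow : ∀ β : ℝ, φ (mpow ρ β) = diagonal (fun i => ((hρ.eigenvalues i ^ β : ℝ) : ℂ)) := by
    intro β
    rw [mpow, hρ.cfc_eq, Matrix.IsHermitian.cfc, StarAlgEquiv.symm_apply_apply]
    rfl
  have htrace : ∀ X, (φ X).trace = X.trace := by
    intro X
    rw [Unitary.conjStarAlgAut_symm_apply, trace_mul_cycle, Unitary.mul_star_self_of_mem U.2,
      one_mul]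
  rw [wyd, ← htrace, map_mul, map_sub, map_sub, map_mul, map_mul, map_mul, map_mul,
    ← star_eq_conjTranspose, map_star, hpow, hpow, star_eq_conjTranspose,
    trace_commutator_diagonal_mul_commutator_diagonal, neg_mul_neg,
    show (1 / 2 : ℂ) = ((1 / 2 : ℝ) : ℂ) by norm_num, ← Complex.ofReal_mul, Complex.ofReal_re,
    mul_sum]
  refine sum_congr rfl fun j _ => ?_
  rw [mul_sum]
  refine sum_congr rfl fun k _ => ?_
  rw [skewWeight, show φ K = star ↑U * K * ↑U from rfl]
  ring

theorem wyd_nonneg (hρ : ρ.PosSemidef) {α : ℝ} (hα0 : 0 ≤ α) (hα1 : α ≤ 1)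
    (K : Matrix (Fin d) (Fin d) ℂ) : 0 ≤ wyd ρ α K := by
  rw [wyd_eq_sum_skewWeight hρ.1]
  exact sum_nonneg fun j _ => sum_nonneg fun k _ =>
    mul_nonneg (skewWeight_nonneg hρ hα0 hα1 j k) (sq_nonneg _)

theorem card_mul_sum_wyd {ι : Type*} [Fintype ι] [LinearOrder ι] (hρ : ρ.IsHermitian) (α : ℝ)
    (w : ι → Matrix (Fin d) (Fin d) ℂ) :
    (Fintype.card ι : ℝ) * ∑ i, wyd ρ α (w i) =
      wyd ρ α (∑ i, w i) +
        ∑ p ∈ univ.filter (fun p : ι × ι => p.1 < p.2), wyd ρ α (w p.1 - w p.2) := by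
  simp only [wyd_eq_sum_skewWeight hρ, Matrix.mul_sum, Matrix.sum_mul, Matrix.mul_sub,
    Matrix.sub_mul, Matrix.sum_apply, Matrix.sub_apply]
  rw [← sum_comm_cycle (u := univ), ← sum_comm_cycle (u := univ.filter _), mul_sum,
    ← sum_add_distrib]
  refine sum_congr rfl fun j _ => ?_
  rw [mul_sum, ← sum_add_distrib]
  refine sum_congr rfl fun k _ => ?_
  rw [← mul_sum, ← mul_sum, mul_left_comm, card_mul_sum_norm_sq_eq, mul_add]

end skewInformation

theorem channel_uncertainty_LB2_general (d n N : ℕ)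
    (ρ : Matrix (Fin d) (Fin d) ℂ) (hρ : ρ.PosSemidef)
    (α : ℝ) (hα0 : 0 < α) (hα1 : α < 1)
    (K : Fin N → Fin n → Matrix (Fin d) (Fin d) ℂ)
    (π : Fin N → Equiv.Perm (Fin n)) :
    ∑ s, ∑ i, wyd ρ α (K s i) ≥
      (1 / (N : ℝ)) *
        ((∑ i, wyd ρ α (∑ s, K s (π s i))) +
          (2 / ((N : ℝ) * ((N : ℝ) - 1))) *
            (∑ p ∈ univ.filter (fun p : Fin N × Fin N => p.1 < p.2),
              Real.sqrt (∑ i, wyd ρ α (K p.1 (π p.1 i) - K p.2 (π p.2 i)))) ^ 2) := by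
  set pairs := univ.filter (fun p : Fin N × Fin N => p.1 < p.2)
  set D : Fin N × Fin N → ℝ := fun p => ∑ i, wyd ρ α (K p.1 (π p.1 i) - K p.2 (π p.2 i))
  have hcard : 2 / ((N : ℝ) * ((N : ℝ) - 1)) = (#pairs : ℝ)⁻¹ := by
    rw [Fintype.card_product_filter_lt, Fintype.card_fin, Nat.cast_choose_two, inv_div]
  have hpairs : (#pairs : ℝ)⁻¹ * (∑ p ∈ pairs, √(D p)) ^ 2 ≤ ∑ p ∈ pairs, D p :=
    inv_card_mul_sq_sum_sqrt_le_sum pairs D fun p _ =>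
      sum_nonneg fun i _ => wyd_nonneg hρ hα0.le hα1.le _
  have hsum : (N : ℝ) * ∑ s, ∑ i, wyd ρ α (K s i) =
      ∑ i, wyd ρ α (∑ s, K s (π s i)) + ∑ p ∈ pairs, D p := by
    rw [sum_congr rfl fun s _ => (Equiv.sum_comp (π s) fun i => wyd ρ α (K s i)).symm,
      sum_comm, mul_sum]
    rw [sum_congr rfl fun i _ => by
      simpa only [Fintype.card_fin] using card_mul_sum_wyd hρ.1 α fun s => K s (π s i)]
    rw [sum_add_distrib, sum_comm]
  rw [ge_iff_le, hcard]
  calc _ ≤ 1 / (N : ℝ) * ((N : ℝ) * ∑ s, ∑ i, wyd ρ α (K s i)) := by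
        rw [hsum]
        gcongr
    _ ≤ ∑ s, ∑ i, wyd ρ α (K s i) := by
        rcases N.eq_zero_or_pos with rfl | hN
        · simp
        · rw [one_div, inv_mul_cancel_left₀ (by positivity)]

theorem channel_uncertainty_LB2 (d n N : ℕ) (hN : 2 ≤ N)
    (ρ : Matrix (Fin d) (Fin d) ℂ) (hρ : ρ.PosSemidef) (hTr : ρ.trace = 1)
    (α : ℝ) (hα0 : 0 < α) (hα1 : α < 1)
    (K : Fin N → Fin n → Matrix (Fin d) (Fin d) ℂ)
    (hK : ∀ s, ∑ i, (K s i)ᴴ * K s i = 1)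
    (π : Fin N → Equiv.Perm (Fin n)) :
    ∑ s, ∑ i, wyd ρ α (K s i) ≥
      (1 / (N : ℝ)) *
        ((∑ i, wyd ρ α (∑ s, K s (π s i))) +
          (2 / ((N : ℝ) * ((N : ℝ) - 1))) *
            (∑ p ∈ univ.filter (fun p : Fin N × Fin N => p.1 < p.2),
              Real.sqrt (∑ i, wyd ρ α (K p.1 (π p.1 i) - K p.2 (π p.2 i)))) ^ 2) :=
  channel_uncertainty_LB2_general d n N ρ hρ α hα0 hα1 K π
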